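/- arXiv:1301.6422 — 4 statements merged into one kernel-verified Lean document; each statement's English description precedes it below -/
import Mathlib

section
/- Let (K_n) and (P_n) be sequences of positive integers with 2K_n ≤ P_n for all n and K_n²/P_n → 0 as n → ∞, and set β_n := 1 − C(P_n − K_n, K_n)/C(P_n, K_n). Then β_n is asymptotically equivalent to K_n²/P_n, i.e. β_n · (P_n/K_n²) → 1 as n → ∞. -/
/-!
Writing `C(p - k, k) / C(p, k) = ∏_{i < k} (1 - k / (p - i))` and bounding each factor between
`1 - k / (p - k)` and `1 - k / p`, Bernoulli's inequality on one side and
`(1 - x)^k ≤ exp (-k x) ≤ 1 / (1 + k x)` on the other squeeze `β · p / k²` between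
`1 / (1 + k² / p)` and `1 / (1 - k / p)`; both bounds tend to `1` since `k / p ≤ k² / p → 0`.
-/

open Filter Finset

theorem one_sub_pow_le_inv_one_add_mul {x : ℝ} (hx₀ : 0 ≤ x) (hx₁ : x ≤ 1) (k : ℕ) :
    (1 - x) ^ k ≤ (1 + k * x)⁻¹ := by
  calc (1 - x) ^ k ≤ Real.exp (-x) ^ k := by
        gcongr
        linarith [Real.add_one_le_exp (-x)]
    _ = (Real.exp (k * x))⁻¹ := by rw [← Real.exp_nat_mul, ← Real.exp_neg]; ring_nf
    _ ≤ (1 + k * x)⁻¹ := by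
        gcongr
        linarith [Real.add_one_le_exp (k * x)]

theorem choose_sub_div_choose_eq_prod {p k : ℕ} (hkp : 2 * k ≤ p) :
    ((p - k).choose k : ℝ) / p.choose k = ∏ i ∈ range k, (1 - k / ((p : ℝ) - i)) := by
  have hk : (k.factorial : ℝ) ≠ 0 := by positivity
  rw [← mul_div_mul_left _ _ hk, ← Nat.cast_mul, ← Nat.cast_mul,
    ← Nat.descFactorial_eq_factorial_mul_choose, ← Nat.descFactorial_eq_factorial_mul_choose,
    Nat.descFactorial_eq_prod_range, Nat.descFactorial_eq_prod_range, Nat.cast_prod,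
    Nat.cast_prod, ← prod_div_distrib]
  refine prod_congr rfl fun i hi => ?_
  have hi : i < k := mem_range.mp hi
  have hpi : (0 : ℝ) < p - i := by
    rw [sub_pos]; exact_mod_cast (by omega : i < p)
  rw [Nat.cast_sub (by omega), Nat.cast_sub (by omega), Nat.cast_sub (by omega)]
  field_simp
  ring

theorem pow_le_choose_sub_div_choose {p k : ℕ} (hkp : 2 * k ≤ p) :
    (1 - k / ((p : ℝ) - k)) ^ k ≤ ((p - k).choose k : ℝ) / p.choose k := by
  have hkp' : (2 * k : ℝ) ≤ p := by exact_mod_cast hkp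
  have hfactor : 0 ≤ 1 - k / ((p : ℝ) - k) := by
    rw [sub_nonneg]; exact div_le_one_of_le₀ (by linarith) (by linarith)
  rw [choose_sub_div_choose_eq_prod hkp]
  calc _ = ∏ _i ∈ range k, (1 - k / ((p : ℝ) - k)) := by rw [prod_const, card_range]
    _ ≤ _ := prod_le_prod (fun _ _ => hfactor) fun i hi => by
      have hik : i < k := mem_range.mp hi
      have hk : (i : ℝ) + 1 ≤ k := by exact_mod_cast hik
      gcongr
      linarith

theorem choose_sub_div_choose_le_pow {p k : ℕ} (hkp : 2 * k ≤ p) :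
    ((p - k).choose k : ℝ) / p.choose k ≤ (1 - k / (p : ℝ)) ^ k := by
  have hkp' : (2 * k : ℝ) ≤ p := by exact_mod_cast hkp
  rw [choose_sub_div_choose_eq_prod hkp]
  calc _ ≤ ∏ _i ∈ range k, (1 - k / (p : ℝ)) := prod_le_prod (fun i hi => ?_) fun i hi => ?_
    _ = _ := by rw [prod_const, card_range]
  · have hi : (i : ℝ) + 1 ≤ k := by exact_mod_cast mem_range.mp hi
    rw [sub_nonneg]; exact div_le_one_of_le₀ (by linarith) (by linarith)
  · have hi : (i : ℝ) + 1 ≤ k := by exact_mod_cast mem_range.mp hi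
    gcongr <;> linarith

theorem inv_one_add_sq_div_le_mul {p k : ℕ} (hk : 1 ≤ k) (hkp : 2 * k ≤ p) :
    (1 + (k : ℝ) ^ 2 / p)⁻¹ ≤
      (1 - ((p - k).choose k : ℝ) / p.choose k) * ((p : ℝ) / (k : ℝ) ^ 2) := by
  have hk' : (1 : ℝ) ≤ k := by exact_mod_cast hk
  have hkp' : (2 * k : ℝ) ≤ p := by exact_mod_cast hkp
  have hp : (0 : ℝ) < p := by linarith
  set t : ℝ := (k : ℝ) ^ 2 / p with ht
  have ht₀ : 0 < t := div_pos (by positivity) hp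
  have hratio : ((p - k).choose k : ℝ) / p.choose k ≤ (1 + t)⁻¹ :=
    calc _ ≤ (1 - k / (p : ℝ)) ^ k := choose_sub_div_choose_le_pow hkp
      _ ≤ (1 + k * (k / (p : ℝ)))⁻¹ :=
        one_sub_pow_le_inv_one_add_mul (by positivity) (div_le_one_of_le₀ (by linarith) hp.le) k
      _ = (1 + t)⁻¹ := by rw [ht]; ring
  rw [← inv_div ((k : ℝ) ^ 2), ← ht]
  calc (1 + t)⁻¹ = (1 - (1 + t)⁻¹) * t⁻¹ := by field_simp; ring
    _ ≤ _ := by gcongr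

theorem mul_le_inv_one_sub_div {p k : ℕ} (hk : 1 ≤ k) (hkp : 2 * k ≤ p) :
    (1 - ((p - k).choose k : ℝ) / p.choose k) * ((p : ℝ) / (k : ℝ) ^ 2) ≤
      (1 - k / (p : ℝ))⁻¹ := by
  have hk' : (1 : ℝ) ≤ k := by exact_mod_cast hk
  have hkp' : (2 * k : ℝ) ≤ p := by exact_mod_cast hkp
  have hpk : (0 : ℝ) < p - k := by linarith
  have hp : (0 : ℝ) < p := by linarith
  have hratio : 1 - (k : ℝ) ^ 2 / (p - k) ≤ ((p - k).choose k : ℝ) / p.choose k := by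
    refine le_trans ?_ (pow_le_choose_sub_div_choose hkp)
    have hx : k / ((p : ℝ) - k) ≤ 1 := div_le_one_of_le₀ (by linarith) hpk.le
    convert one_add_mul_le_pow (a := -(k / ((p : ℝ) - k))) (by linarith) k using 1 <;> ring
  calc _ ≤ (k : ℝ) ^ 2 / (p - k) * ((p : ℝ) / (k : ℝ) ^ 2) := by gcongr; linarith
    _ = _ := by field_simp

theorem beta_equiv_kn2pn (K P : ℕ → ℕ) (hK : ∀ n, 1 ≤ K n) (hKP : ∀ n, 2 * K n ≤ P n)
    (h0 : Tendsto (fun n => (K n : ℝ) ^ 2 / (P n : ℝ)) atTop (nhds 0)) :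
    Tendsto (fun n =>
        (1 - ((P n - K n).choose (K n) : ℝ) / ((P n).choose (K n) : ℝ)) *
          ((P n : ℝ) / (K n : ℝ) ^ 2))
      atTop (nhds 1) := by
  have hdiv : Tendsto (fun n => (K n : ℝ) / P n) atTop (nhds 0) :=
    squeeze_zero (fun n => by positivity)
      (fun n => div_le_div_of_nonneg_right
        (le_self_pow₀ (by exact_mod_cast hK n) two_ne_zero) (P n).cast_nonneg) h0
  have hlower : Tendsto (fun n => (1 + (K n : ℝ) ^ 2 / P n)⁻¹) atTop (nhds 1) := by
    simpa using (h0.const_add 1).inv₀ (by norm_num)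
  have hupper : Tendsto (fun n => (1 - (K n : ℝ) / P n)⁻¹) atTop (nhds 1) := by
    simpa using (hdiv.const_sub 1).inv₀ (by norm_num)
  exact tendsto_of_tendsto_of_tendsto_of_le_of_le hlower hupper
    (fun n => inv_one_add_sq_div_le_mul (hK n) (hKP n))
    (fun n => mul_le_inv_one_sub_div (hK n) (hKP n))
end

section
/- Let (K_n) and (P_n) be sequences of positive integers with 3K_n ≤ P_n for all n and K_n²/P_n → 0 as n → ∞. Set β_n := 1 − C(P_n − K_n, K_n)/C(P_n, K_n) and β̃_n := 1 − C(P_n − 2K_n, K_n)/C(P_n, K_n). Then for every ε with 0 < ε < 1 there exists N such that for all n ≥ N, 1 − ε ≤ β̃_n/β_n − 1 ≤ 1 + ε; equivalently, β̃_n/β_n → 2 as n → ∞. -/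
/-!
Writing `C(P - c, K) / C(P, K) = ∏_{i < K} (1 - c / (P - i))` and bounding every factor between
`1 - c / (P - K + 1)` and `P / (P + c)`, Bernoulli's inequality squeezes
`c K / (P + c K) ≤ 1 - C(P - c, K) / C(P, K) ≤ c K / (P - K + 1)`.
For `c = m K` and `t = K² / P → 0` both bounds are `m t (1 + O(t))`, so `β ~ t` and `β̃ ~ 2 t`.
-/

open Filter Finset Topology

theorem cast_choose_sub_div_cast_choose {K P c : ℕ} (hc : c ≤ P) :
    ((P - c).choose K : ℝ) / (P.choose K : ℝ) =
      ∏ i ∈ range K, ((P - c - i : ℝ) / (P - i)) := by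
  rw [Nat.cast_choose_eq_descPochhammer_div, Nat.cast_choose_eq_descPochhammer_div,
    descPochhammer_eval_eq_prod_range, descPochhammer_eval_eq_prod_range,
    div_div_div_cancel_right₀ (by positivity), ← prod_div_distrib, Nat.cast_sub hc]

theorem one_sub_cast_choose_sub_div_cast_choose_le {K P c : ℕ} (h : c + K ≤ P) :
    1 - ((P - c).choose K : ℝ) / (P.choose K : ℝ) ≤ c * K / (P - K + 1) := by
  have hKP : (K : ℝ) + c ≤ P := by exact_mod_cast (by omega : K + c ≤ P)
  have hd : (0 : ℝ) < P - K + 1 := by linarith [(c.cast_nonneg : (0 : ℝ) ≤ c)]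
  have hx : (c : ℝ) / (P - K + 1) ≤ 1 := by rw [div_le_one hd]; linarith
  have hfactor : ∀ i ∈ range K, 1 - c / (P - K + 1 : ℝ) ≤ (P - c - i) / (P - i) := by
    intro i hi
    have hiK : (i : ℝ) + 1 ≤ K := by exact_mod_cast mem_range.mp hi
    have hpi : (0 : ℝ) < P - i := by linarith
    rw [show (P - c - i : ℝ) / (P - i) = 1 - c / (P - i) by field_simp; ring]
    gcongr
    linarith
  calc 1 - ((P - c).choose K : ℝ) / (P.choose K : ℝ)
      ≤ 1 - (1 + K * (-(c / (P - K + 1) : ℝ))) := by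
        gcongr
        calc 1 + K * (-(c / (P - K + 1) : ℝ)) ≤ (1 + -(c / (P - K + 1) : ℝ)) ^ K :=
              one_add_mul_le_pow (by linarith [div_nonneg c.cast_nonneg hd.le]) K
          _ = ∏ _i ∈ range K, (1 - c / (P - K + 1) : ℝ) := by simp [sub_eq_add_neg]
          _ ≤ _ := by
            rw [cast_choose_sub_div_cast_choose (by omega)]
            exact prod_le_prod (fun _ _ => by linarith) hfactor
    _ = c * K / (P - K + 1) := by ring

theorem div_add_le_one_sub_cast_choose_sub_div_cast_choose {K P c : ℕ} (h : c + K ≤ P) :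
    c * K / (P + c * K) ≤ 1 - ((P - c).choose K : ℝ) / (P.choose K : ℝ) := by
  rcases K.eq_zero_or_pos with rfl | hK
  · simp
  have hKP : (K : ℝ) + c ≤ P := by exact_mod_cast (by omega : K + c ≤ P)
  have hK1 : (1 : ℝ) ≤ K := by exact_mod_cast hK
  have hP : (0 : ℝ) < P := by linarith [(c.cast_nonneg : (0 : ℝ) ≤ c)]
  have hfactor : ∀ i ∈ range K, (P - c - i : ℝ) / (P - i) ≤ (1 + (c : ℝ) / P)⁻¹ := by
    intro i hi
    have hiK : (i : ℝ) + 1 ≤ K := by exact_mod_cast mem_range.mp hi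
    rw [inv_eq_one_div, div_le_div_iff₀ (by linarith) (by positivity)]
    field_simp
    nlinarith [(c.cast_nonneg : (0 : ℝ) ≤ c), (i.cast_nonneg : (0 : ℝ) ≤ i)]
  have hratio : ((P - c).choose K : ℝ) / (P.choose K : ℝ) ≤ (1 + K * ((c : ℝ) / P))⁻¹ :=
    calc ((P - c).choose K : ℝ) / (P.choose K : ℝ)
        ≤ ∏ _i ∈ range K, (1 + (c : ℝ) / P)⁻¹ := by
          rw [cast_choose_sub_div_cast_choose (by omega)]
          refine prod_le_prod (fun i hi => ?_) hfactor
          have hiK : (i : ℝ) + 1 ≤ K := by exact_mod_cast mem_range.mp hi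
          exact div_nonneg (by linarith) (by linarith)
      _ = ((1 + (c : ℝ) / P) ^ K)⁻¹ := by simp
      _ ≤ (1 + K * ((c : ℝ) / P))⁻¹ := by
          gcongr
          exact one_add_mul_le_pow (by linarith [div_nonneg c.cast_nonneg hP.le]) K
  calc (c * K / (P + c * K) : ℝ) = 1 - (1 + K * ((c : ℝ) / P))⁻¹ := by field_simp; ring
    _ ≤ _ := by linarith

theorem one_sub_cast_choose_sub_mul_div_cast_choose_mem_Icc {m K P : ℕ} (hKP : (m + 1) * K ≤ P)
    (hK2P : K ^ 2 < P) :
    1 - ((P - m * K).choose K : ℝ) / (P.choose K : ℝ) ∈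
      Set.Icc ((m : ℝ) * (K ^ 2 / P) / (1 + m * (K ^ 2 / P)))
        ((m : ℝ) * (K ^ 2 / P) / (1 - K ^ 2 / P)) := by
  have hc : m * K + K ≤ P := by linarith
  have hP : (0 : ℝ) < P := by exact_mod_cast hK2P.pos
  have hK2P' : (K : ℝ) ^ 2 < P := by exact_mod_cast hK2P
  constructor
  · calc (m : ℝ) * (K ^ 2 / P) / (1 + m * (K ^ 2 / P))
          = ((m * K : ℕ) : ℝ) * K / (P + (m * K : ℕ) * K) := by
          push_cast; field_simp
      _ ≤ _ := div_add_le_one_sub_cast_choose_sub_div_cast_choose hc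
  · calc _ ≤ ((m * K : ℕ) : ℝ) * K / (P - K + 1) := one_sub_cast_choose_sub_div_cast_choose_le hc
      _ ≤ (m * K ^ 2 / (P - K ^ 2) : ℝ) := by
          push_cast
          rw [mul_assoc, ← sq]
          gcongr
          nlinarith [sq_nonneg ((K : ℝ) - 1)]
      _ = m * (K ^ 2 / P) / (1 - K ^ 2 / P) := by field_simp

theorem tendsto_one_sub_cast_choose_sub_mul_div_cast_choose_div {m : ℕ} {K P : ℕ → ℕ}
    (hK : ∀ n, 1 ≤ K n) (hKP : ∀ n, (m + 1) * K n ≤ P n)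
    (h0 : Tendsto (fun n => (K n : ℝ) ^ 2 / P n) atTop (𝓝 0)) :
    Tendsto (fun n => (1 - ((P n - m * K n).choose (K n) : ℝ) / ((P n).choose (K n) : ℝ)) /
      ((K n : ℝ) ^ 2 / P n)) atTop (𝓝 (m : ℝ)) := by
  set t : ℕ → ℝ := fun n => (K n : ℝ) ^ 2 / P n
  have hP_pos : ∀ n, (0 : ℝ) < P n := fun n => by
    have := hKP n
    exact_mod_cast (by nlinarith [hK n] : 0 < P n)
  have ht_pos : ∀ n, 0 < t n := fun n =>
    div_pos (pow_pos (by exact_mod_cast hK n) 2) (hP_pos n)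
  have hbounds : ∀ᶠ n in atTop,
      m / (1 + m * t n) ≤
          (1 - ((P n - m * K n).choose (K n) : ℝ) / ((P n).choose (K n) : ℝ)) / t n ∧
        (1 - ((P n - m * K n).choose (K n) : ℝ) / ((P n).choose (K n) : ℝ)) / t n ≤
          m / (1 - t n) := by
    filter_upwards [h0.eventually (gt_mem_nhds one_pos)] with n htn
    have hK2P : K n ^ 2 < P n := by exact_mod_cast (div_lt_one (hP_pos n)).mp htn
    obtain ⟨hlow, hup⟩ := one_sub_cast_choose_sub_mul_div_cast_choose_mem_Icc (hKP n) hK2P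
    constructor
    · calc (m / (1 + m * t n) : ℝ) = m * t n / (1 + m * t n) / t n := by
            field_simp [(ht_pos n).ne']
        _ ≤ _ := div_le_div_of_nonneg_right hlow (ht_pos n).le
    · calc _ ≤ m * t n / (1 - t n) / t n := div_le_div_of_nonneg_right hup (ht_pos n).le
        _ = m / (1 - t n) := by field_simp [(ht_pos n).ne']
  have hlow : Tendsto (fun n => (m : ℝ) / (1 + m * t n)) atTop (𝓝 m) := by
    simpa [Pi.div_def] using tendsto_const_nhds.div ((h0.const_mul (m : ℝ)).const_add 1) (by simp)
  have hup : Tendsto (fun n => (m : ℝ) / (1 - t n)) atTop (𝓝 m) := by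
    simpa [Pi.div_def] using tendsto_const_nhds.div (h0.const_sub 1) (by simp)
  exact tendsto_of_tendsto_of_tendsto_of_le_of_le' hlow hup
    (hbounds.mono fun _ h => h.1) (hbounds.mono fun _ h => h.2)

theorem beta_tilde_over_beta (K P : ℕ → ℕ) (hK : ∀ n, 1 ≤ K n) (hKP : ∀ n, 3 * K n ≤ P n)
    (h0 : Tendsto (fun n => (K n : ℝ) ^ 2 / (P n : ℝ)) atTop (nhds 0)) :
    (∀ ε : ℝ, 0 < ε → ε < 1 → ∃ N : ℕ, ∀ n ≥ N,
        1 - ε ≤ (1 - ((P n - 2 * K n).choose (K n) : ℝ) / ((P n).choose (K n) : ℝ)) /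
            (1 - ((P n - K n).choose (K n) : ℝ) / ((P n).choose (K n) : ℝ)) - 1 ∧
        (1 - ((P n - 2 * K n).choose (K n) : ℝ) / ((P n).choose (K n) : ℝ)) /
            (1 - ((P n - K n).choose (K n) : ℝ) / ((P n).choose (K n) : ℝ)) - 1 ≤ 1 + ε) ∧
    Tendsto (fun n =>
        (1 - ((P n - 2 * K n).choose (K n) : ℝ) / ((P n).choose (K n) : ℝ)) /
          (1 - ((P n - K n).choose (K n) : ℝ) / ((P n).choose (K n) : ℝ)))
      atTop (nhds 2) := by
  have hβ := tendsto_one_sub_cast_choose_sub_mul_div_cast_choose_div (m := 1) hK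
    (fun n => by linarith [hKP n]) h0
  have hβ' := tendsto_one_sub_cast_choose_sub_mul_div_cast_choose_div (m := 2) hK hKP h0
  simp only [one_mul, Nat.cast_one, Nat.cast_ofNat] at hβ hβ'
  have ht : ∀ n, (K n : ℝ) ^ 2 / P n ≠ 0 := fun n =>
    div_ne_zero (by simp [Nat.one_le_iff_ne_zero.mp (hK n)])
      (Nat.cast_ne_zero.mpr (by linarith [hK n, hKP n]))
  have hlim := (hβ'.div hβ one_ne_zero).congr fun n => div_div_div_cancel_right₀ (ht n) _ _
  rw [div_one] at hlim
  refine ⟨fun ε hε _ => ?_, hlim⟩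
  obtain ⟨N, hN⟩ := Metric.tendsto_atTop.mp hlim ε hε
  refine ⟨N, fun n hn => ?_⟩
  have := abs_lt.mp (Real.dist_eq _ _ ▸ hN n hn)
  constructor <;> linarith [this.1, this.2]
end

section
/- For all natural numbers P and K with 1 ≤ K and 3K ≤ P, the following chains of inequalities hold in the real numbers: (1 − K/(P − 2K + 1))^K ≤ C(P − 2K, K)/C(P − K, K) ≤ (1 − K/(P − K))^K, and consequently exp(−K²/(P − 3K + 1)) ≤ C(P − 2K, K)/C(P − K, K) ≤ exp(−K²/(P − K)). -/
/-! Writing both binomials as descending factorials, `C(n - d, k) / C(n, k)` is the product of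
the `k` factors `1 - d / (n - i)`, `i < k`, each of which lies between `1 - d / (n - k + 1)` and
`1 - d / n`. With `n = P - K` and `d = k = K` this gives the polynomial bounds; the exponential
ones follow from `1 - x ≤ exp (-x)` and its reverse form `exp (-x / (1 - x)) ≤ 1 - x`. -/

open Finset

namespace Nat

theorem cast_choose_sub_div_cast_choose {n d k : ℕ} (h : d + k ≤ n) :
    ((n - d).choose k : ℝ) / n.choose k = ∏ i ∈ range k, (1 - (d : ℝ) / (n - i)) := by
  have hfac : (k ! : ℝ) ≠ 0 := by positivity
  rw [← mul_div_mul_left _ _ hfac]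
  simp only [← Nat.cast_mul, ← descFactorial_eq_factorial_mul_choose, descFactorial_eq_prod_range,
    Nat.cast_prod, ← prod_div_distrib]
  refine prod_congr rfl fun i hi => ?_
  have hi : i < k := mem_range.mp hi
  have hpos : (0 : ℝ) < n - i := by
    rw [sub_pos]; exact_mod_cast (by omega : i < n)
  rw [Nat.cast_sub (by omega), Nat.cast_sub (by omega), Nat.cast_sub (by omega), one_sub_div hpos.ne']
  ring

theorem pow_le_cast_choose_sub_div_cast_choose {n d k : ℕ} (h : d + k ≤ n) :
    (1 - (d : ℝ) / (n - k + 1)) ^ k ≤ ((n - d).choose k : ℝ) / n.choose k := by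
  have hdk : (d : ℝ) + k ≤ n := by exact_mod_cast h
  have hpos : (0 : ℝ) < n - k + 1 := by linarith [d.cast_nonneg (α := ℝ)]
  rw [cast_choose_sub_div_cast_choose h, pow_eq_prod_const]
  refine prod_le_prod (fun _ _ => ?_) fun i hi => ?_
  · rw [sub_nonneg, div_le_one hpos]; linarith
  · have hi : (i : ℝ) + 1 ≤ k := by exact_mod_cast mem_range.mp hi
    exact sub_le_sub_left (div_le_div_of_nonneg_left d.cast_nonneg hpos (by linarith)) 1

theorem cast_choose_sub_div_cast_choose_le_pow {n d k : ℕ} (h : d + k ≤ n) :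
    ((n - d).choose k : ℝ) / n.choose k ≤ (1 - (d : ℝ) / n) ^ k := by
  have hdk : (d : ℝ) + k ≤ n := by exact_mod_cast h
  rw [cast_choose_sub_div_cast_choose h, pow_eq_prod_const]
  refine prod_le_prod (fun i hi => ?_) fun i hi => ?_
  all_goals
    have hi : (i : ℝ) + 1 ≤ k := by exact_mod_cast mem_range.mp hi
    have hpos : (0 : ℝ) < n - i := by linarith [d.cast_nonneg (α := ℝ)]
  · rw [sub_nonneg, div_le_one hpos]; linarith
  · exact sub_le_sub_left (div_le_div_of_nonneg_left d.cast_nonneg hpos (by linarith)) 1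

end Nat

namespace Real

-- `exp (a / (b - a)) ≥ 1 + a / (b - a) = b / (b - a)`, then invert.
theorem exp_neg_div_sub_le_one_sub_div {a b : ℝ} (hb : 0 < b) (hab : a < b) :
    exp (-(a / (b - a))) ≤ 1 - a / b := by
  have hba : 0 < b - a := sub_pos.mpr hab
  have hexp : b / (b - a) ≤ exp (a / (b - a)) := by
    have := add_one_le_exp (a / (b - a))
    rwa [div_add_one hba.ne', add_sub_cancel] at this
  calc exp (-(a / (b - a))) = (exp (a / (b - a)))⁻¹ := exp_neg _
    _ ≤ (b / (b - a))⁻¹ := inv_anti₀ (div_pos hb hba) hexp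
    _ = 1 - a / b := by rw [inv_div, one_sub_div hb.ne']

end Real

theorem choose_ratio_bounds2_general (P K : ℕ) (h : 3 * K ≤ P) :
    ((1 - (K : ℝ) / ((P : ℝ) - 2 * (K : ℝ) + 1)) ^ K ≤
        ((P - 2 * K).choose K : ℝ) / ((P - K).choose K : ℝ) ∧
      ((P - 2 * K).choose K : ℝ) / ((P - K).choose K : ℝ) ≤
        (1 - (K : ℝ) / ((P : ℝ) - (K : ℝ))) ^ K) ∧
    (Real.exp (-(K : ℝ) ^ 2 / ((P : ℝ) - 3 * (K : ℝ) + 1)) ≤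
        ((P - 2 * K).choose K : ℝ) / ((P - K).choose K : ℝ) ∧
      ((P - 2 * K).choose K : ℝ) / ((P - K).choose K : ℝ) ≤
        Real.exp (-(K : ℝ) ^ 2 / ((P : ℝ) - (K : ℝ)))) := by
  have hP : (3 * K : ℝ) ≤ P := by exact_mod_cast h
  have hcast : ((P - K : ℕ) : ℝ) = P - K := Nat.cast_sub (by omega)
  have hsub : P - 2 * K = P - K - K := by omega
  have lower := Nat.pow_le_cast_choose_sub_div_cast_choose (n := P - K) (d := K) (k := K) (by omega)
  have upper := Nat.cast_choose_sub_div_cast_choose_le_pow (n := P - K) (d := K) (k := K) (by omega)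
  rw [hcast, ← hsub, sub_sub, ← two_mul] at lower
  rw [hcast, ← hsub] at upper
  refine ⟨⟨lower, upper⟩, le_trans ?_ lower, upper.trans ?_⟩
  · have hstep := Real.exp_neg_div_sub_le_one_sub_div (a := K) (b := P - 2 * K + 1)
      (by linarith) (by linarith)
    calc Real.exp (-(K : ℝ) ^ 2 / ((P : ℝ) - 3 * K + 1))
        = Real.exp (-(K / ((P - 2 * K + 1) - K))) ^ K := by
          rw [← Real.exp_nat_mul]; congr 1; ring
      _ ≤ _ := by gcongr
  · calc (1 - (K : ℝ) / (P - K)) ^ K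
        ≤ Real.exp (-(K / (P - K))) ^ K := by
          gcongr
          · exact sub_nonneg.mpr (div_le_one_of_le₀ (by linarith) (by linarith))
          · exact Real.one_sub_le_exp_neg _
      _ = _ := by rw [← Real.exp_nat_mul]; congr 1; ring

theorem choose_ratio_bounds2 (P K : ℕ) (hK : 1 ≤ K) (h : 3 * K ≤ P) :
    ((1 - (K : ℝ) / ((P : ℝ) - 2 * (K : ℝ) + 1)) ^ K ≤
        ((P - 2 * K).choose K : ℝ) / ((P - K).choose K : ℝ) ∧
      ((P - 2 * K).choose K : ℝ) / ((P - K).choose K : ℝ) ≤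
        (1 - (K : ℝ) / ((P : ℝ) - (K : ℝ))) ^ K) ∧
    (Real.exp (-(K : ℝ) ^ 2 / ((P : ℝ) - 3 * (K : ℝ) + 1)) ≤
        ((P - 2 * K).choose K : ℝ) / ((P - K).choose K : ℝ) ∧
      ((P - 2 * K).choose K : ℝ) / ((P - K).choose K : ℝ) ≤
        Real.exp (-(K : ℝ) ^ 2 / ((P : ℝ) - (K : ℝ)))) :=
  choose_ratio_bounds2_general P K h
end

section
/- Let P, K, x, m be natural numbers with x + 1 ≤ K ≤ P and P + x ≥ 3K. For a natural number y define (as a real number) P_y := C(P, y) · C(P − y, K − y) · C(P − K, K − y) · C(P − 2K + y, K)^m / C(P, K)^{2+m}. Then P_{x+1} ≠ 0 and P_x / P_{x+1} = [ (x+1)(P − 2K + x + 1) / (K − x)² ] · [ (P − 3K + x + 1)/(P − 2K + x + 1) ]^m. -/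
/-- `Pjoint P K m y` is (up to the common normalization) the probability that two nodes
sharing exactly `y` keys are jointly isolated from `m` nodes in the intersection region. -/
noncomputable def Pjoint (P K m y : ℕ) : ℝ :=
  ((P.choose y : ℝ) * ((P - y).choose (K - y) : ℝ) * ((P - K).choose (K - y) : ℝ) *
      ((P - 2 * K + y).choose K : ℝ) ^ m) /
    ((P.choose K : ℝ)) ^ (2 + m)

/-!
Each of the four binomial factors of `Pjoint` changes between `y = x + 1` and `y = x` by a ratio
of neighbouring binomial coefficients, which the absorption identities
`C(n, k + 1) (k + 1) = C(n, k) (n - k)`, `(n + 1) C(n, k) = C(n + 1, k + 1) (k + 1)` and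
`C(n, k) (n + 1) = C(n + 1, k) (n + 1 - k)` evaluate. The normalization `C(P, K)^(2 + m)` cancels,
and the factors `P - x` coming from the first two ratios cancel against each other.
-/

namespace Nat

variable {𝕜 : Type*} [Field 𝕜] [CharZero 𝕜] {n k : ℕ}

theorem cast_choose_div_choose_pred_right (hk : 0 < k) (h : k ≤ n) :
    (n.choose k : 𝕜) / n.choose (k - 1) = (n - k + 1) / k := by
  obtain ⟨k, rfl⟩ : ∃ j, k = j + 1 := ⟨k - 1, by omega⟩
  have key := congrArg (Nat.cast : ℕ → 𝕜) (choose_succ_right_eq n k)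
  push_cast [Nat.cast_sub (by omega : k ≤ n)] at key
  have hc : (n.choose k : 𝕜) ≠ 0 := Nat.cast_ne_zero.2 (choose_pos (by omega)).ne'
  rw [add_tsub_cancel_right, div_eq_div_iff hc (Nat.cast_ne_zero.2 k.succ_ne_zero)]
  push_cast
  linear_combination key

theorem cast_choose_div_choose_succ_right (h : k < n) :
    (n.choose k : 𝕜) / n.choose (k + 1) = (k + 1) / (n - k) := by
  have hpred := cast_choose_div_choose_pred_right (𝕜 := 𝕜) (by omega : 0 < k + 1) h
  rw [add_tsub_cancel_right] at hpred
  rw [← inv_div, hpred, inv_div]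
  push_cast
  ring

theorem cast_choose_div_choose_pred_pred (hk : 0 < k) (h : k ≤ n) :
    (n.choose k : 𝕜) / (n - 1).choose (k - 1) = n / k := by
  obtain ⟨n, rfl⟩ : ∃ j, n = j + 1 := ⟨n - 1, by omega⟩
  obtain ⟨k, rfl⟩ : ∃ j, k = j + 1 := ⟨k - 1, by omega⟩
  have key := congrArg (Nat.cast : ℕ → 𝕜) (add_one_mul_choose_eq n k)
  push_cast at key
  have hc : (n.choose k : 𝕜) ≠ 0 := Nat.cast_ne_zero.2 (choose_pos (by omega)).ne'
  rw [add_tsub_cancel_right, add_tsub_cancel_right,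
    div_eq_div_iff hc (Nat.cast_ne_zero.2 k.succ_ne_zero)]
  push_cast
  linear_combination -key

theorem cast_choose_div_choose_succ_left (h : k ≤ n + 1) :
    (n.choose k : 𝕜) / (n + 1).choose k = (n + 1 - k) / (n + 1) := by
  have key := congrArg (Nat.cast : ℕ → 𝕜) (choose_mul_succ_eq n k)
  push_cast [Nat.cast_sub h] at key
  rw [div_eq_div_iff (Nat.cast_ne_zero.2 (choose_pos h).ne') (Nat.cast_add_one_ne_zero n)]
  linear_combination key

end Nat

theorem Pjoint_ne_zero {P K m y : ℕ} (hyP : y ≤ P) (hKP : K ≤ P) (h3K : 3 * K ≤ P + y) :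
    Pjoint P K m y ≠ 0 := by
  unfold Pjoint
  have := Nat.choose_pos (n := P - 2 * K + y) (k := K) (by omega)
  have := Nat.choose_pos (n := P - K) (k := K - y) (by omega)
  have := Nat.choose_pos (n := P - y) (k := K - y) (by omega)
  have := Nat.choose_pos (n := P) (k := y) (by omega)
  have := Nat.choose_pos hKP
  positivity

theorem Pjoint_div_Pjoint {P K m y z : ℕ} (hKP : K ≤ P) :
    Pjoint P K m y / Pjoint P K m z =
      (P.choose y : ℝ) / P.choose z * (((P - y).choose (K - y) : ℝ) / (P - z).choose (K - z)) *
        (((P - K).choose (K - y) : ℝ) / (P - K).choose (K - z)) *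
        (((P - 2 * K + y).choose K : ℝ) / (P - 2 * K + z).choose K) ^ m := by
  have := Nat.choose_pos hKP
  rw [Pjoint, Pjoint, div_div_div_cancel_right₀ (by positivity), mul_div_mul_comm,
    mul_div_mul_comm, mul_div_mul_comm, div_pow]

theorem Pjoint_ratio (P K x m : ℕ) (hx : x + 1 ≤ K) (hKP : K ≤ P) (h3K : 3 * K ≤ P + x) :
    Pjoint P K m (x + 1) ≠ 0 ∧
    Pjoint P K m x / Pjoint P K m (x + 1) =
      ((x : ℝ) + 1) * ((P : ℝ) - 2 * (K : ℝ) + (x : ℝ) + 1) / ((K : ℝ) - (x : ℝ)) ^ 2 *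
        (((P : ℝ) - 3 * (K : ℝ) + (x : ℝ) + 1) / ((P : ℝ) - 2 * (K : ℝ) + (x : ℝ) + 1)) ^ m := by
  refine ⟨Pjoint_ne_zero (by omega) hKP (by omega), ?_⟩
  rw [Pjoint_div_Pjoint hKP]
  simp only [Nat.sub_add_eq, ← add_assoc]
  rw [Nat.cast_choose_div_choose_succ_right (by omega),
    Nat.cast_choose_div_choose_pred_pred (by omega) (by omega),
    Nat.cast_choose_div_choose_pred_right (by omega) (by omega),
    Nat.cast_choose_div_choose_succ_left (by omega)]
  push_cast [Nat.cast_sub hKP, Nat.cast_sub (by omega : x ≤ P), Nat.cast_sub (by omega : x ≤ K),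
    Nat.cast_sub (by omega : 2 * K ≤ P)]
  have hPx : (P : ℝ) - x ≠ 0 := sub_ne_zero.2 (by exact_mod_cast (by omega : P ≠ x))
  congr 1
  · field_simp
    ring
  · ring
end
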